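/- Suppose P* is an n×n matrix satisfying the Riccati-type quadratic matrix equation (F·P* − G)·P* = 0, where G, F are n×n matrices. If additionally (Rᵀ ⊗ F + I ⊗ (F·P* − G)) is invertible, with R an n_z×n_z matrix, then there exists a unique n×n_z matrix Q* with vec(Q*) = −(Rᵀ ⊗ F + I ⊗ (F·P* − G))⁻¹ vec(L), and the pair (P*, Q*) makes X_t = P* X_{t−1} + Q* Z_t satisfy G X_t = F E_t X_{t+1} + L Z_t along Z_t = R Z_{t−1} + ε_t, in the sense that G(P*x + Q*z) = F(P*(P*x + Q*z) + Q*Rz) + Lz for all vectors x, z. -/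
import Mathlib


open Matrix Kronecker

/-- Column-stacking vectorization: `vec X (j, i) = X i j`. -/
def vecM {n m : ℕ} (X : Matrix (Fin n) (Fin m) ℝ) : (Fin m) × (Fin n) → ℝ :=
  fun p => X p.2 p.1

lemma vecM_inj {n m : ℕ} {X Y : Matrix (Fin n) (Fin m) ℝ} (h : vecM X = vecM Y) : X = Y := by
  ext i j
  exact congrFun h (j, i)

lemma vecM_add {n m : ℕ} (X Y : Matrix (Fin n) (Fin m) ℝ) :
    vecM (X + Y) = vecM X + vecM Y := rfl

lemma vecM_neg {n m : ℕ} (X : Matrix (Fin n) (Fin m) ℝ) :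
    vecM (-X) = -vecM X := rfl

lemma kron_vecM {n m nz : ℕ} (B : Matrix (Fin nz) (Fin nz) ℝ)
    (M : Matrix (Fin n) (Fin m) ℝ) (X : Matrix (Fin m) (Fin nz) ℝ) :
    (Bᵀ ⊗ₖ M) *ᵥ vecM X = vecM (M * X * B) := by
  funext p
  obtain ⟨j, i⟩ := p
  simp only [vecM, mulVec, dotProduct, Matrix.mul_apply, kroneckerMap_apply,
    Fintype.sum_prod_type, transpose_apply, Finset.sum_mul, Finset.mul_sum]
  exact Finset.sum_congr rfl fun k _ => Finset.sum_congr rfl fun l _ => by ring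

theorem stmt_1 (n nz : ℕ) (G F P : Matrix (Fin n) (Fin n) ℝ)
    (L : Matrix (Fin n) (Fin nz) ℝ) (R : Matrix (Fin nz) (Fin nz) ℝ)
    (hP : (F * P - G) * P = 0)
    (A : Matrix ((Fin nz) × (Fin n)) ((Fin nz) × (Fin n)) ℝ)
    (hA : A = Rᵀ ⊗ₖ F + (1 : Matrix (Fin nz) (Fin nz) ℝ) ⊗ₖ (F * P - G))
    (hInv : IsUnit A.det) :
    ∃! Q : Matrix (Fin n) (Fin nz) ℝ,
      vecM Q = -(A⁻¹ *ᵥ vecM L) ∧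
      ∀ (x : Fin n → ℝ) (z : Fin nz → ℝ),
        G *ᵥ (P *ᵥ x + Q *ᵥ z) =
          F *ᵥ (P *ᵥ (P *ᵥ x + Q *ᵥ z) + Q *ᵥ (R *ᵥ z)) + L *ᵥ z := by
  set Q : Matrix (Fin n) (Fin nz) ℝ := Matrix.of fun i j => (-(A⁻¹ *ᵥ vecM L)) (j, i) with hQdef
  have hvec : vecM Q = -(A⁻¹ *ᵥ vecM L) := rfl
  have hAQ : A *ᵥ vecM Q = -vecM L := by
    rw [hvec, Matrix.mulVec_neg, Matrix.mulVec_mulVec, Matrix.mul_nonsing_inv A hInv,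
      Matrix.one_mulVec]
  have h1 : A *ᵥ vecM Q = vecM (F * Q * R + (F * P - G) * Q) := by
    rw [hA, Matrix.add_mulVec, show (1 : Matrix (Fin nz) (Fin nz) ℝ) = (1 : Matrix (Fin nz) (Fin nz) ℝ)ᵀ from Matrix.transpose_one.symm,
      kron_vecM, kron_vecM, Matrix.mul_one, vecM_add]
  have hmat : F * Q * R + (F * P - G) * Q = -L := by
    apply vecM_inj
    rw [← h1, hAQ, vecM_neg]
  have hGQ : G * Q = F * (P * Q) + F * (Q * R) + L := by
    rw [Matrix.sub_mul] at hmat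
    have h2 : G * Q - (F * (P * Q) + F * (Q * R) + L)
        = -(F * Q * R + (F * P * Q - G * Q) - -L) := by
      rw [Matrix.mul_assoc F P Q, Matrix.mul_assoc F Q R]; abel
    rw [← sub_eq_zero, h2, hmat]
    abel
  have hGP : G * P = F * (P * P) := by
    rw [Matrix.sub_mul, Matrix.mul_assoc, sub_eq_zero] at hP
    exact hP.symm
  refine ⟨Q, ⟨hvec, ?_⟩, ?_⟩
  · intro x z
    have lhs : G *ᵥ (P *ᵥ x + Q *ᵥ z) = (G * P) *ᵥ x + (G * Q) *ᵥ z := by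
      rw [Matrix.mulVec_add, Matrix.mulVec_mulVec, Matrix.mulVec_mulVec]
    rw [lhs, hGP, hGQ]
    simp only [Matrix.mulVec_add, Matrix.mulVec_mulVec, Matrix.add_mulVec, Matrix.mul_assoc]
    abel
  · rintro Q' ⟨hQ', -⟩
    apply vecM_inj
    rw [hQ', hvec]
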